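/- Permutation Invariance Lemma (Lemma 3.1, main claim). Let (X_i, Y_i) ∈ ℝ^{p×2}, 1 ≤ i ≤ n, be random matrices and let q_{n,1},…,q_{n,n} and θ_{n,1},…,θ_{n,n} ∈ [0,1] satisfy (n−i)·q_{n,i}·θ_{n,i} = i·q_{n,i+1}·(1−θ_{n,i+1}) for all 1 ≤ i ≤ n−1. Let δ_1,…,δ_n be independent with δ_i ~ Bernoulli(θ_{n,i}), independent of the data, and set ζ_{i,k} = δ_i·X_k + (1−δ_i)·Y_k. Then for any permutation invariant function f(x_1,…,x_n) of n vectors in ℝ^p, the quantity n⁻¹ Σ_{i=1}^n (n!)⁻¹ Σ_{σ} E[ I{σ_i = k}·q_{n,i}·f(U_{σ,i}, ζ_{i,σ_i}) | X, Y ] does not depend on k ∈ {1,…,n}, where σ ranges over permutations of {1,…,n}, U_{σ,i} = (X_{σ_1},…,X_{σ_{i−1}}, Y_{σ_{i+1}},…,Y_{σ_n}), and the conditional expectation is over the δ_i only. -/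

import Mathlib

/-! Since `δ_i ∈ {0, 1}`, the `i`-th expectation is `θ_i F(σ{≤ i}) + (1 - θ_i) F(σ{< i})`, where
`F S` is `f` evaluated with `X` on the slots in `S` and `Y` elsewhere (permutation invariance
moves `σ` from the arguments of `f` to the set). Summing over the `σ` with `σ j = k` gives
`permSum F s j k`, which depends on `j` only through whether `j ∈ s` (compose `σ` with the swap
of two slots on the same side), while `∑ j, permSum F s j k`, which is `#s` times its value inside
`s` plus `#sᶜ` times its value outside, does not depend on `k`. At level `s = {< m}`,
`1 ≤ m ≤ n - 1`, the two terms carry the weights `q_{m-1} θ_{m-1}` and `q_m (1 - θ_m)`, which the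
hypothesis makes proportional to `#s = m` and `#sᶜ = n - m`; the levels `m = 0` and `m = n` are
the constant configurations `Y` and `X`. -/

open MeasureTheory

namespace Stmt8

variable {n p : ℕ}

/-- The interpolation configuration `(X_{σ_1}, …, X_{σ_{i−1}}, ζ, Y_{σ_{i+1}}, …, Y_{σ_n})`:
slot `k < i` holds `x (σ k)`, slot `i` holds `z`, and slot `k > i` holds `y (σ k)`. -/
def lindVec (x y : Fin n → Fin p → ℝ) (σ : Equiv.Perm (Fin n)) (i : Fin n)
    (z : Fin p → ℝ) : Fin n → Fin p → ℝ :=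
  fun k => if k < i then x (σ k) else if k = i then z else y (σ k)

/-- A function of `n` vectors in `ℝ^p` is permutation invariant if it is unchanged
by permuting its inputs. -/
def PermInvariant (f : (Fin n → Fin p → ℝ) → ℝ) : Prop :=
  ∀ (σ : Equiv.Perm (Fin n)) (v : Fin n → Fin p → ℝ), f (v ∘ σ) = f v

open Finset

section PermSum

variable {α : Type*} [Fintype α] [DecidableEq α] (F : Finset α → ℝ) (s : Finset α)

def permSum (j k : α) : ℝ :=
  ∑ σ : Equiv.Perm α, if σ j = k then F (s.map σ.toEmbedding) else 0

theorem permSum_eq_of_mem_iff {j j' : α} (h : j ∈ s ↔ j' ∈ s) (k : α) :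
    permSum F s j k = permSum F s j' k := by
  unfold permSum
  rw [← Equiv.sum_comp (Equiv.mulRight (Equiv.swap j j'))]
  refine sum_congr rfl fun σ _ => ?_
  have hs : s.map (σ * Equiv.swap j j').toEmbedding = s.map σ.toEmbedding := by
    ext x
    simp only [mem_map_equiv, Equiv.Perm.mul_def, Equiv.symm_trans_apply, Equiv.symm_swap]
    rw [Equiv.swap_apply_def]
    split_ifs <;> simp_all
  simp [hs]

theorem sum_permSum (k : α) :
    ∑ j, permSum F s j k = ∑ σ : Equiv.Perm α, F (s.map σ.toEmbedding) := by
  unfold permSum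
  rw [sum_comm]
  refine sum_congr rfl fun σ _ => ?_
  simp [← σ.eq_symm_apply]

theorem permSum_eq_of_forall_map_eq (hs : ∀ σ : Equiv.Perm α, s.map σ.toEmbedding = s)
    (j k k' : α) : permSum F s j k = permSum F s j k' := by
  unfold permSum
  rw [← Equiv.sum_comp (Equiv.mulLeft (Equiv.swap k k'))]
  refine sum_congr rfl fun σ _ => ?_
  simp [hs, Equiv.swap_apply_eq_iff]

theorem card_mul_permSum_add_card_compl_mul_permSum {j₁ j₀ : α} (h₁ : j₁ ∈ s) (h₀ : j₀ ∉ s)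
    (k : α) :
    (#s : ℝ) * permSum F s j₁ k + #sᶜ * permSum F s j₀ k =
      ∑ σ : Equiv.Perm α, F (s.map σ.toEmbedding) := by
  rw [← sum_permSum F s k, ← sum_add_sum_compl s]
  rw [sum_congr rfl fun j hj => permSum_eq_of_mem_iff F s (iff_of_true hj h₁) k,
    sum_congr rfl fun j hj => permSum_eq_of_mem_iff F s (iff_of_false (mem_compl.1 hj) h₀) k]
  simp

theorem mul_permSum_add_mul_permSum_eq {j₁ j₀ : α} (h₁ : j₁ ∈ s) (h₀ : j₀ ∉ s) {a b : ℝ}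
    (hab : (#sᶜ : ℝ) * a = #s * b) (k k' : α) :
    a * permSum F s j₁ k + b * permSum F s j₀ k =
      a * permSum F s j₁ k' + b * permSum F s j₀ k' := by
  have hc : (#sᶜ : ℝ) ≠ 0 := by exact_mod_cast (card_pos.2 ⟨j₀, mem_compl.2 h₀⟩).ne'
  have hk := (card_mul_permSum_add_card_compl_mul_permSum F s h₁ h₀ k).trans
    (card_mul_permSum_add_card_compl_mul_permSum F s h₁ h₀ k').symm
  apply mul_left_cancel₀ hc
  linear_combination b * hk + (permSum F s j₁ k - permSum F s j₁ k') * hab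

end PermSum

theorem Fin.Iio_succ_eq_Iic_castSucc (i : Fin n) : Iio i.succ = Iic i.castSucc := by
  ext j
  simp [Fin.lt_def, Fin.le_def]

theorem sum_mul_permSum_Iic_add_mul_permSum_Iio_eq (F : Finset (Fin (n + 1)) → ℝ)
    {a b : Fin (n + 1) → ℝ}
    (hab : ∀ i : Fin n, ((n : ℝ) - i) * a i.castSucc = (i + 1) * b i.succ) (k k' : Fin (n + 1)) :
    ∑ i, (a i * permSum F (Iic i) i k + b i * permSum F (Iio i) i k) =
      ∑ i, (a i * permSum F (Iic i) i k' + b i * permSum F (Iio i) i k') := by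
  have hsplit : ∀ k, ∑ i, (a i * permSum F (Iic i) i k + b i * permSum F (Iio i) i k) =
      a (Fin.last n) * permSum F univ (Fin.last n) k + b 0 * permSum F ∅ 0 k +
        ∑ i : Fin n, (a i.castSucc * permSum F (Iic i.castSucc) i.castSucc k +
          b i.succ * permSum F (Iic i.castSucc) i.succ k) := by
    intro k
    have hlast : Iic (Fin.last n) = univ := by ext; simp [Fin.le_last]
    have hzero : Iio (0 : Fin (n + 1)) = ∅ := by ext; simp
    rw [sum_add_distrib, Fin.sum_univ_castSucc, Fin.sum_univ_succ (f := fun i => b i * _), hlast,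
      hzero]
    simp only [Fin.Iio_succ_eq_Iic_castSucc, sum_add_distrib]
    ring
  have hpair (i : Fin n) := mul_permSum_add_mul_permSum_eq F (Iic i.castSucc)
    (j₁ := i.castSucc) (j₀ := i.succ) (a := a i.castSucc) (b := b i.succ) (by simp)
    (by simp [Fin.le_def]) (by
      have hc : #(Iic i.castSucc)ᶜ = n - i := by simp [card_compl]
      rw [hc, Fin.card_Iic, Nat.cast_sub i.is_lt.le]
      push_cast
      exact hab i) k k'
  rw [hsplit k, hsplit k', sum_congr rfl fun i _ => hpair i,
    permSum_eq_of_forall_map_eq F univ (by simp) _ k k',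
    permSum_eq_of_forall_map_eq F ∅ (by simp) _ k k']

theorem integral_comp_of_forall_eq_zero_or_eq_one {Ω : Type*} [MeasurableSpace Ω]
    {μ : Measure Ω} [IsProbabilityMeasure μ] {δ : Ω → ℝ} {θ : ℝ} (hθ : 0 ≤ θ)
    (hδ : Measurable δ) (h01 : ∀ ω, δ ω = 0 ∨ δ ω = 1)
    (hμ : μ {ω | δ ω = 1} = ENNReal.ofReal θ) (g : ℝ → ℝ) :
    ∫ ω, g (δ ω) ∂μ = θ * g 1 + (1 - θ) * g 0 := by
  have hs : MeasurableSet {ω | δ ω = 1} := hδ (measurableSet_singleton 1)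
  have hg : (fun ω => g (δ ω)) =
      fun ω => g 0 + {ω | δ ω = 1}.indicator (fun _ => g 1 - g 0) ω := by
    funext ω
    rcases h01 ω with h | h <;> simp [h, Set.indicator]
  rw [hg, integral_add (integrable_const _) ((integrable_const _).indicator hs),
    integral_const, integral_indicator_const _ hs, probReal_univ, measureReal_def, hμ,
    ENNReal.toReal_ofReal hθ, smul_eq_mul, smul_eq_mul]
  ring

theorem lindVec_x_eq_piecewise_comp (x y : Fin n → Fin p → ℝ) (σ : Equiv.Perm (Fin n)) (i : Fin n) :
    lindVec x y σ i (x (σ i)) = ((Iic i).map σ.toEmbedding).piecewise x y ∘ σ := by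
  funext a
  simp only [lindVec, Function.comp_apply, piecewise, mem_map_equiv, Equiv.symm_apply_apply,
    mem_Iic]
  rcases lt_trichotomy a i with h | rfl | h
  · simp [h, h.le]
  · simp
  · simp [not_lt.2 h.le, h.ne', not_le.2 h]

theorem lindVec_y_eq_piecewise_comp (x y : Fin n → Fin p → ℝ) (σ : Equiv.Perm (Fin n)) (i : Fin n) :
    lindVec x y σ i (y (σ i)) = ((Iio i).map σ.toEmbedding).piecewise x y ∘ σ := by
  funext a
  simp only [lindVec, Function.comp_apply, piecewise, mem_map_equiv, Equiv.symm_apply_apply,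
    mem_Iio]
  rcases lt_trichotomy a i with h | rfl | h
  · simp [h]
  · simp
  · simp [not_lt.2 h.le, h.ne']

theorem integral_mul_lindVec_of_bernoulli {Ω : Type*} [MeasurableSpace Ω] {μ : Measure Ω}
    [IsProbabilityMeasure μ] {δ : Ω → ℝ} {θ : ℝ} (hθ : 0 ≤ θ) (hδ : Measurable δ)
    (h01 : ∀ ω, δ ω = 0 ∨ δ ω = 1) (hμ : μ {ω | δ ω = 1} = ENNReal.ofReal θ)
    {f : (Fin n → Fin p → ℝ) → ℝ} (hf : PermInvariant f) (x y : Fin n → Fin p → ℝ)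
    (σ : Equiv.Perm (Fin n)) (i : Fin n) (c : ℝ) :
    ∫ ω, c * f (lindVec x y σ i (fun j => δ ω * x (σ i) j + (1 - δ ω) * y (σ i) j)) ∂μ =
      c * (θ * f (((Iic i).map σ.toEmbedding).piecewise x y) +
        (1 - θ) * f (((Iio i).map σ.toEmbedding).piecewise x y)) := by
  rw [integral_comp_of_forall_eq_zero_or_eq_one hθ hδ h01 hμ
    (fun t => c * f (lindVec x y σ i (fun j => t * x (σ i) j + (1 - t) * y (σ i) j)))]
  simp only [one_mul, zero_mul, sub_self, sub_zero, zero_add, add_zero]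
  rw [lindVec_x_eq_piecewise_comp, lindVec_y_eq_piecewise_comp, hf, hf]
  ring

/-- **Permutation Invariance Lemma (Lemma 3.1, main claim).**
With weights `q_{n,i}` and Bernoulli parameters `θ_{n,i} ∈ [0,1]` satisfying
`(n−i)·q_{n,i}·θ_{n,i} = i·q_{n,i+1}·(1−θ_{n,i+1})` for `1 ≤ i ≤ n−1`, independent
Bernoulli variables `δ_i ~ Bernoulli(θ_{n,i})` independent of the (conditioned-upon)
data `x, y`, and `ζ_{i,k} = δ_i·x_k + (1−δ_i)·y_k`, for any permutation invariant `f`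
the quantity `n⁻¹ Σᵢ (n!)⁻¹ Σ_σ E[ I{σ_i = k}·q_{n,i}·f(U_{σ,i}, ζ_{i,σ_i}) ]`
does not depend on `k`. -/
theorem permutation_invariance_lemma
    {Ωδ : Type*} [MeasurableSpace Ωδ] (μδ : Measure Ωδ) [IsProbabilityMeasure μδ]
    (x y : Fin n → Fin p → ℝ)
    (q θ : Fin n → ℝ) (hθ : ∀ i, θ i ∈ Set.Icc (0 : ℝ) 1)
    (hqθ : ∀ (i : ℕ) (h1 : 1 ≤ i) (h : i < n),
      ((n : ℝ) - i) * q ⟨i - 1, by omega⟩ * θ ⟨i - 1, by omega⟩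
        = (i : ℝ) * q ⟨i, h⟩ * (1 - θ ⟨i, h⟩))
    (δ : Fin n → Ωδ → ℝ)
    (hδmeas : ∀ i, Measurable (δ i))
    (hδ01 : ∀ i ω, δ i ω = 0 ∨ δ i ω = 1)
    (hδbern : ∀ i, μδ {ω | δ i ω = 1} = ENNReal.ofReal (θ i))
    (f : (Fin n → Fin p → ℝ) → ℝ) (hf : PermInvariant f)
    (k k' : Fin n) :
    (n : ℝ)⁻¹ * ∑ i : Fin n, ((n.factorial : ℝ))⁻¹ * ∑ σ : Equiv.Perm (Fin n),
      ∫ ω, (if σ i = k then (1 : ℝ) else 0) * q i *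
        f (lindVec x y σ i (fun j => δ i ω * x (σ i) j + (1 - δ i ω) * y (σ i) j)) ∂μδ
    = (n : ℝ)⁻¹ * ∑ i : Fin n, ((n.factorial : ℝ))⁻¹ * ∑ σ : Equiv.Perm (Fin n),
      ∫ ω, (if σ i = k' then (1 : ℝ) else 0) * q i *
        f (lindVec x y σ i (fun j => δ i ω * x (σ i) j + (1 - δ i ω) * y (σ i) j)) ∂μδ := by
  set F : Finset (Fin n) → ℝ := fun s => f (s.piecewise x y)
  have hexp (k : Fin n) (i : Fin n) : ∑ σ : Equiv.Perm (Fin n),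
      ∫ ω, (if σ i = k then (1 : ℝ) else 0) * q i *
        f (lindVec x y σ i (fun j => δ i ω * x (σ i) j + (1 - δ i ω) * y (σ i) j)) ∂μδ =
      q i * θ i * permSum F (Iic i) i k + q i * (1 - θ i) * permSum F (Iio i) i k := by
    simp only [integral_mul_lindVec_of_bernoulli (hθ i).1 (hδmeas i) (hδ01 i) (hδbern i) hf,
      permSum, mul_sum, ← sum_add_distrib]
    refine sum_congr rfl fun σ _ => ?_
    split_ifs <;> ring
  simp only [hexp, ← mul_sum]
  congr 2
  obtain _ | n := n
  · exact k.elim0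
  refine sum_mul_permSum_Iic_add_mul_permSum_Iio_eq F (fun i => ?_) k k'
  have h : ((n + 1 : ℕ) - (i + 1 : ℕ) : ℝ) * q i.castSucc * θ i.castSucc =
      (i + 1 : ℕ) * q i.succ * (1 - θ i.succ) := hqθ (i + 1) (by omega) (by omega)
  push_cast at h
  linear_combination h

end Stmt8
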